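/- Under the same setup: R*_{f(X)} − R*_X ≤ E_X |η(X) − η_f(f(X))|, i.e. the increase in Bayes error under a transformation is bounded by the expected absolute deviation between the original posterior and the transformed-space posterior. -/

import Mathlib

open Finset

/-- Feature marginal of a joint pmf on `X × {0,1}`. -/
noncomputable def marg {X : Type*} (p : X → Bool → ℝ) (x : X) : ℝ := p x false + p x true

/-- Conditional probability `p(y|x)`, with the convention that it is `0`
when the feature marginal vanishes. -/
noncomputable def condP {X : Type*} (p : X → Bool → ℝ) (x : X) (y : Bool) : ℝ :=
  if marg p x = 0 then 0 else p x y / marg p x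

/-- Bayes error `R*_X = ∑_x p(x) (1 - max_y p(y|x))`. -/
noncomputable def bayesError {X : Type*} [Fintype X] (p : X → Bool → ℝ) : ℝ :=
  ∑ x, marg p x * (1 - max (condP p x false) (condP p x true))

/-- Pushforward joint pmf under a deterministic map on the feature coordinate. -/
noncomputable def pushforward {X X' : Type*} [Fintype X] [DecidableEq X']
    (f : X → X') (p : X → Bool → ℝ) (x' : X') (y : Bool) : ℝ :=
  ∑ x ∈ Finset.univ.filter (fun x => f x = x'), p x y

/-!
Both Bayes errors are sums over `x` weighted by `p(x)`: the transformed one because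
`p(f = x') = ∑_{f x = x'} p(x)`. Pointwise, the Bayes error at posterior `η` is
`min η (1 - η)`, a `1`-Lipschitz function of `η`, so the difference of the summands at `x`
is at most `p(x) |η(x) - η_f(f x)|`.
-/

section Posterior

variable {X : Type*} {p : X → Bool → ℝ} {x : X}

lemma marg_nonneg (hp : ∀ x y, 0 ≤ p x y) (x : X) : 0 ≤ marg p x :=
  add_nonneg (hp x false) (hp x true)

lemma condP_false_eq_one_sub (hm : marg p x ≠ 0) : condP p x false = 1 - condP p x true := by
  rw [condP, condP, if_neg hm, if_neg hm, eq_sub_iff_add_eq, ← add_div]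
  exact div_self hm

lemma one_sub_max_condP (hm : marg p x ≠ 0) :
    1 - max (condP p x false) (condP p x true) = min (condP p x true) (1 - condP p x true) := by
  rw [condP_false_eq_one_sub hm, ← min_sub_sub_left, sub_sub_cancel, min_comm]

end Posterior

lemma min_one_sub_sub_min_one_sub_le_abs (a b : ℝ) :
    min b (1 - b) - min a (1 - a) ≤ |a - b| := by
  have h := abs_min_sub_min_le_max a (1 - a) b (1 - b)
  rw [sub_sub_sub_cancel_left, abs_sub_comm b, max_self, abs_sub_comm] at h
  exact (le_abs_self _).trans h

section Pushforward

variable {X X' : Type*} [Fintype X] [DecidableEq X'] (f : X → X')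
  (p : X → Bool → ℝ)

lemma marg_pushforward (x' : X') :
    marg (pushforward f p) x' = ∑ x ∈ univ.filter (fun x => f x = x'), marg p x := by
  simp only [marg, pushforward, sum_add_distrib]

lemma sum_marg_pushforward_mul [Fintype X'] (g : X' → ℝ) :
    ∑ x', marg (pushforward f p) x' * g x' = ∑ x, marg p x * g (f x) := by
  rw [← sum_fiberwise univ f (fun x => marg p x * g (f x))]
  refine sum_congr rfl fun x' _ => ?_
  rw [marg_pushforward, sum_mul]
  exact sum_congr rfl fun x hx => by rw [(mem_filter.mp hx).2]

lemma bayesError_pushforward [Fintype X'] :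
    bayesError (pushforward f p) = ∑ x, marg p x *
      (1 - max (condP (pushforward f p) (f x) false) (condP (pushforward f p) (f x) true)) :=
  sum_marg_pushforward_mul f p _

lemma marg_le_marg_pushforward (hp : ∀ x y, 0 ≤ p x y) (x : X) :
    marg p x ≤ marg (pushforward f p) (f x) := by
  rw [marg_pushforward]
  exact single_le_sum (fun i _ => marg_nonneg hp i) (mem_filter.mpr ⟨mem_univ x, rfl⟩)

end Pushforward

theorem bayesError_increase_le_expected_deviation_general {X X' : Type*} [Fintype X] [Fintype X']
    [DecidableEq X'] (p : X → Bool → ℝ) (hp : ∀ x y, 0 ≤ p x y)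
    (f : X → X') :
    bayesError (pushforward f p) - bayesError p ≤
      ∑ x, marg p x * |condP p x true - condP (pushforward f p) (f x) true| := by
  rw [bayesError_pushforward, bayesError, ← sum_sub_distrib]
  refine sum_le_sum fun x _ => ?_
  by_cases hm : marg p x = 0
  · simp [hm]
  have hmq : marg (pushforward f p) (f x) ≠ 0 :=
    ((lt_of_le_of_ne (marg_nonneg hp x) (Ne.symm hm)).trans_le
      (marg_le_marg_pushforward f p hp x)).ne'
  rw [← mul_sub, one_sub_max_condP hm, one_sub_max_condP hmq]
  exact mul_le_mul_of_nonneg_left (min_one_sub_sub_min_one_sub_le_abs _ _) (marg_nonneg hp x)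

/-- The increase in Bayes error under a transformation is bounded by the expected
absolute deviation between the original and transformed-space posteriors. -/
theorem bayesError_increase_le_expected_deviation {X X' : Type*} [Fintype X] [Fintype X']
    [DecidableEq X'] (p : X → Bool → ℝ) (hp : ∀ x y, 0 ≤ p x y)
    (hsum : ∑ x, ∑ y, p x y = 1) (f : X → X') :
    bayesError (pushforward f p) - bayesError p ≤
      ∑ x, marg p x * |condP p x true - condP (pushforward f p) (f x) true| :=
  bayesError_increase_le_expected_deviation_general p hp f
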